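/- arXiv:1307.6126 — 2 statements merged into one kernel-verified Lean document; each statement's English description precedes it below -/
import Mathlib

section
/- Let L be an SPS lattice and S a wide covering square of L. Then in L[S], γ(S) = ᾱ_l(S) or γ(S) = ᾱ_r(S). -/
namespace ForkCongruence

/-- A congruence of a lattice: an equivalence relation compatible with `⊔` and `⊓`. -/
structure LatCon (K : Type*) [Lattice K] where
  rel : K → K → Prop
  refl : ∀ x, rel x x
  symm : ∀ {x y}, rel x y → rel y x
  trans : ∀ {x y z}, rel x y → rel y z → rel x z
  sup_comp : ∀ {a b c d}, rel a b → rel c d → rel (a ⊔ c) (b ⊔ d)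
  inf_comp : ∀ {a b c d}, rel a b → rel c d → rel (a ⊓ c) (b ⊓ d)

namespace LatCon

variable {K : Type*} [Lattice K]

theorem rel_ext {θ ψ : LatCon K} (h : θ.rel = ψ.rel) : θ = ψ := by
  cases θ; cases ψ; cases h; rfl

instance : PartialOrder (LatCon K) where
  le θ ψ := ∀ ⦃x y⦄, θ.rel x y → ψ.rel x y
  le_refl _ _ _ h := h
  le_trans _ _ _ h₁ h₂ _ _ h := h₂ (h₁ h)
  le_antisymm θ ψ h₁ h₂ :=
    rel_ext (by funext x y; exact propext ⟨fun h => h₁ h, fun h => h₂ h⟩)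

/-- The smallest lattice congruence containing a binary relation. -/
def gen (s : K → K → Prop) : LatCon K where
  rel x y := ∀ θ : LatCon K, (∀ a b, s a b → θ.rel a b) → θ.rel x y
  refl x _ _ := LatCon.refl _ x
  symm h θ hs := θ.symm (h θ hs)
  trans h₁ h₂ θ hs := θ.trans (h₁ θ hs) (h₂ θ hs)
  sup_comp h₁ h₂ θ hs := θ.sup_comp (h₁ θ hs) (h₂ θ hs)
  inf_comp h₁ h₂ θ hs := θ.inf_comp (h₁ θ hs) (h₂ θ hs)

instance : SemilatticeSup (LatCon K) where
  sup θ ψ := gen (fun x y => θ.rel x y ∨ ψ.rel x y)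
  le_sup_left θ ψ x y h χ hχ := hχ x y (Or.inl h)
  le_sup_right θ ψ x y h χ hχ := hχ x y (Or.inr h)
  sup_le θ ψ χ h₁ h₂ x y h := h χ (fun a b hab => hab.elim (fun w => h₁ w) (fun w => h₂ w))

instance : SemilatticeInf (LatCon K) where
  inf θ ψ :=
    { rel := fun x y => θ.rel x y ∧ ψ.rel x y
      refl := fun x => ⟨θ.refl x, ψ.refl x⟩
      symm := fun h => ⟨θ.symm h.1, ψ.symm h.2⟩
      trans := fun h₁ h₂ => ⟨θ.trans h₁.1 h₂.1, ψ.trans h₁.2 h₂.2⟩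
      sup_comp := fun h₁ h₂ => ⟨θ.sup_comp h₁.1 h₂.1, ψ.sup_comp h₁.2 h₂.2⟩
      inf_comp := fun h₁ h₂ => ⟨θ.inf_comp h₁.1 h₂.1, ψ.inf_comp h₁.2 h₂.2⟩ }
  inf_le_left _ _ _ _ h := h.1
  inf_le_right _ _ _ _ h := h.2
  le_inf _ _ _ h₁ h₂ _ _ h := ⟨h₁ h, h₂ h⟩

instance : Lattice (LatCon K) :=
  { (inferInstance : SemilatticeSup (LatCon K)),
    (inferInstance : SemilatticeInf (LatCon K)) with }

instance : OrderBot (LatCon K) where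
  bot :=
    { rel := Eq
      refl := fun _ => rfl
      symm := Eq.symm
      trans := Eq.trans
      sup_comp := fun h₁ h₂ => by rw [h₁, h₂]
      inf_comp := fun h₁ h₂ => by rw [h₁, h₂] }
  bot_le θ x y h := h ▸ θ.refl x

/-- The principal congruence `con(a, b)`: the smallest congruence collapsing `a` and `b`. -/
def conOf (a b : K) : LatCon K := gen (fun x y => x = a ∧ y = b)

/-- The restriction of a congruence of `K` to a sublattice `L`. -/
def restrict (θ : LatCon K) (L : Sublattice K) : LatCon L where
  rel x y := θ.rel ↑x ↑y
  refl x := θ.refl ↑x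
  symm h := θ.symm h
  trans h₁ h₂ := θ.trans h₁ h₂
  sup_comp {a b c d} h₁ h₂ := by
    show θ.rel ↑(a ⊔ c) ↑(b ⊔ d)
    rw [Sublattice.coe_sup, Sublattice.coe_sup]
    exact θ.sup_comp h₁ h₂
  inf_comp {a b c d} h₁ h₂ := by
    show θ.rel ↑(a ⊓ c) ↑(b ⊓ d)
    rw [Sublattice.coe_inf, Sublattice.coe_inf]
    exact θ.inf_comp h₁ h₂

/-- A congruence `α` of the sublattice `L` extends to `K` if it is the restriction of some
congruence of `K`. -/
def ExtendsTo {L : Sublattice K} (α : LatCon L) : Prop :=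
  ∃ θ : LatCon K, θ.restrict L = α

/-- The minimal extension of a congruence of a sublattice `L` of `K`: the smallest congruence
of `K` containing it (viewed as a set of pairs). -/
def minExt {L : Sublattice K} (α : LatCon L) : LatCon K :=
  gen (fun x y => ∃ (hx : x ∈ L) (hy : y ∈ L), α.rel ⟨x, hx⟩ ⟨y, hy⟩)

end LatCon

/-- `K` is a congruence-preserving extension of its sublattice `L`: the restriction map is a
bijection from the congruences of `K` onto the congruences of `L`. -/
def IsCongPresExt {K : Type*} [Lattice K] (L : Sublattice K) : Prop :=
  Function.Bijective (fun θ : LatCon K => θ.restrict L)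

/-- A lattice is semimodular if `x ⊓ y ⋖ y` implies `x ⋖ x ⊔ y`. -/
def IsSemimodular (K : Type*) [Lattice K] : Prop :=
  ∀ x y : K, x ⊓ y ⋖ y → x ⋖ x ⊔ y

/-- A lattice is slim if its set of join-irreducible elements contains no three-element
antichain. -/
def IsSlim (K : Type*) [Lattice K] : Prop :=
  ¬ ∃ x y z : K, SupIrred x ∧ SupIrred y ∧ SupIrred z ∧
      ¬x ≤ y ∧ ¬y ≤ x ∧ ¬x ≤ z ∧ ¬z ≤ x ∧ ¬y ≤ z ∧ ¬z ≤ y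

/-- An SPS lattice: slim, planar (which follows from slimness together with semimodularity)
and semimodular. Finiteness is assumed separately as `[Finite K]`. -/
def IsSPS (K : Type*) [Lattice K] : Prop :=
  IsSemimodular K ∧ IsSlim K

/-- A covering square `S = {o, a_l, a_r, i}` of a lattice. -/
structure CovSquare (K : Type*) [Lattice K] where
  o : K
  al : K
  ar : K
  i : K
  al_ne_ar : al ≠ ar
  inf_eq : al ⊓ ar = o
  sup_eq : al ⊔ ar = i
  o_covby_al : o ⋖ al
  o_covby_ar : o ⋖ ar
  al_covby_i : al ⋖ i
  ar_covby_i : ar ⋖ i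

namespace CovSquare

variable {K : Type*} [Lattice K]

/-- A covering square is tight if `a_l` and `a_r` are the only lower covers of `i`. -/
def Tight (S : CovSquare K) : Prop :=
  ∀ x : K, x ⋖ S.i → x = S.al ∨ x = S.ar

/-- A covering square is wide if it is not tight. -/
def Wide (S : CovSquare K) : Prop := ¬ S.Tight

/-- A covering square is distributive if the principal ideal `↓i` is a distributive lattice. -/
def Distributive (S : CovSquare K) : Prop :=
  ∀ x y z : K, x ≤ S.i → y ≤ S.i → z ≤ S.i →
    x ⊓ (y ⊔ z) = (x ⊓ y) ⊔ (x ⊓ z)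

end CovSquare

/-- `K` together with the data below is the fork extension `L[S]` of the sublattice `L` of `K`
at the covering square `S` of `L`. The elements `xl k, yl k, zl k` represent
`x_{l,k+1}, y_{l,k+1}, z_{l,k+1}` of the construction (`0`-based indexing), and similarly
on the right. -/
structure ForkExtension (K : Type*) [Lattice K] (L : Sublattice K) (S : CovSquare L) where
  n : ℕ
  m : ℕ
  npos : 0 < n
  mpos : 0 < m
  t : K
  zl : ℕ → K
  zr : ℕ → K
  xl : ℕ → L
  yl : ℕ → L
  xr : ℕ → L
  yr : ℕ → L
  xl_zero : xl 0 = S.al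
  yl_zero : yl 0 = S.o
  xr_zero : xr 0 = S.ar
  yr_zero : yr 0 = S.o
  -- the successive covering squares `{y_{l,k+1}, x_{l,k+1}, y_{l,k}, x_{l,k}}` in `L`
  xl_succ_covby : ∀ k, k + 1 < n → xl (k + 1) ⋖ xl k
  yl_succ_covby : ∀ k, k + 1 < n → yl (k + 1) ⋖ yl k
  yl_covby_xl : ∀ k, k < n → yl k ⋖ xl k
  xl_succ_ne_yl : ∀ k, k + 1 < n → xl (k + 1) ≠ yl k
  xl_inf_yl : ∀ k, k + 1 < n → xl (k + 1) ⊓ yl k = yl (k + 1)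
  xl_sup_yl : ∀ k, k + 1 < n → xl (k + 1) ⊔ yl k = xl k
  -- `n` is largest possible
  left_max : ¬ ∃ x : L, x ⋖ xl (n - 1) ∧ x ≠ yl (n - 1) ∧
      x ⊓ yl (n - 1) ⋖ x ∧ x ⊓ yl (n - 1) ⋖ yl (n - 1) ∧ x ⊔ yl (n - 1) = xl (n - 1)
  -- the same on the right
  xr_succ_covby : ∀ k, k + 1 < m → xr (k + 1) ⋖ xr k
  yr_succ_covby : ∀ k, k + 1 < m → yr (k + 1) ⋖ yr k
  yr_covby_xr : ∀ k, k < m → yr k ⋖ xr k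
  xr_succ_ne_yr : ∀ k, k + 1 < m → xr (k + 1) ≠ yr k
  xr_inf_yr : ∀ k, k + 1 < m → xr (k + 1) ⊓ yr k = yr (k + 1)
  xr_sup_yr : ∀ k, k + 1 < m → xr (k + 1) ⊔ yr k = xr k
  right_max : ¬ ∃ x : L, x ⋖ xr (m - 1) ∧ x ≠ yr (m - 1) ∧
      x ⊓ yr (m - 1) ⋖ x ∧ x ⊓ yr (m - 1) ⋖ yr (m - 1) ∧ x ⊔ yr (m - 1) = xr (m - 1)
  -- the new elements
  t_not_mem : t ∉ L
  zl_not_mem : ∀ k, k < n → zl k ∉ L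
  zr_not_mem : ∀ k, k < m → zr k ∉ L
  mem_or_new : ∀ x : K, x ∈ L ∨ x = t ∨ (∃ k < n, x = zl k) ∨ (∃ k < m, x = zr k)
  -- `{o, z_{l,1}, z_{r,1}, a_l, a_r, t, i}` is a sublattice isomorphic to `S7`
  zl_sup_zr : zl 0 ⊔ zr 0 = t
  zl_zero_covby_t : zl 0 ⋖ t
  zr_zero_covby_t : zr 0 ⋖ t
  t_covby_i : t ⋖ (S.i : K)
  -- the chains `z_{l,1} ≻ ⋯ ≻ z_{l,n}` and `z_{r,1} ≻ ⋯ ≻ z_{r,m}`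
  zl_succ_covby : ∀ k, k + 1 < n → zl (k + 1) ⋖ zl k
  zr_succ_covby : ∀ k, k + 1 < m → zr (k + 1) ⋖ zr k
  -- `y_{l,k} ⋖ z_{l,k} ⋖ x_{l,k}` in `K`, and similarly on the right
  yl_covby_zl : ∀ k, k < n → (yl k : K) ⋖ zl k
  zl_covby_xl : ∀ k, k < n → zl k ⋖ (xl k : K)
  yr_covby_zr : ∀ k, k < m → (yr k : K) ⋖ zr k
  zr_covby_xr : ∀ k, k < m → zr k ⋖ (xr k : K)

namespace ForkExtension

variable {K : Type*} [Lattice K] {L : Sublattice K} {S : CovSquare L}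

/-- `x_{l,k+1}` is a (left) protrusion: it has at least three lower covers in `L`. -/
def ProtL (F : ForkExtension K L S) (k : ℕ) : Prop :=
  k < F.n ∧ ∃ u v w : L, u ≠ v ∧ u ≠ w ∧ v ≠ w ∧
    u ⋖ F.xl k ∧ v ⋖ F.xl k ∧ w ⋖ F.xl k

/-- `x_{r,k+1}` is a (right) protrusion: it has at least three lower covers in `L`. -/
def ProtR (F : ForkExtension K L S) (k : ℕ) : Prop :=
  k < F.m ∧ ∃ u v w : L, u ≠ v ∧ u ≠ w ∧ v ≠ w ∧
    u ⋖ F.xr k ∧ v ⋖ F.xr k ∧ w ⋖ F.xr k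

end ForkExtension




section Aux

private lemma exists_supIrred_le {α : Type*} [Lattice α] [Finite α] {x y : α} (h : ¬ x ≤ y) :
    ∃ j : α, SupIrred j ∧ j ≤ x ∧ ¬ j ≤ y := by
  have wf : WellFounded ((· < ·) : α → α → Prop) := (Finite.to_wellFoundedLT (α := α)).wf
  obtain ⟨j, ⟨hjx, hjy⟩, hmin⟩ := wf.has_min {j : α | j ≤ x ∧ ¬ j ≤ y} ⟨x, le_refl x, h⟩
  refine ⟨j, ⟨?_, ?_⟩, hjx, hjy⟩
  · intro hm
    exact hjy (le_trans (hm inf_le_left) inf_le_right)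
  · intro b c hbc
    by_contra hne
    push_neg at hne
    obtain ⟨hb, hc⟩ := hne
    have hbj : b ≤ j := hbc ▸ le_sup_left
    have hcj : c ≤ j := hbc ▸ le_sup_right
    have hby : ¬ (b ≤ y ∧ c ≤ y) := fun ⟨h1, h2⟩ => hjy (hbc ▸ sup_le h1 h2)
    rcases not_and_or.mp hby with hb' | hc'
    · exact hmin b ⟨hbj.trans hjx, hb'⟩ (lt_of_le_of_ne hbj hb)
    · exact hmin c ⟨hcj.trans hjx, hc'⟩ (lt_of_le_of_ne hcj hc)

private lemma exists_le_covBy {α : Type*} [PartialOrder α] [Finite α] {a b : α} (h : a < b) :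
    ∃ c, a ≤ c ∧ c ⋖ b := by
  have wf : WellFounded ((· > ·) : α → α → Prop) := (Finite.to_wellFoundedGT (α := α)).wf
  obtain ⟨c, ⟨hac, hcb⟩, hmax⟩ := wf.has_min {c : α | a ≤ c ∧ c < b} ⟨a, le_refl a, h⟩
  exact ⟨c, hac, hcb, fun d hcd hdb => hmax d ⟨hac.trans hcd.le, hdb⟩ hcd⟩

private lemma conOf_rel_self {K : Type*} [Lattice K] (a b : K) : (LatCon.conOf a b).rel a b :=
  fun θ hs => hs a b ⟨rfl, rfl⟩

private lemma conOf_le {K : Type*} [Lattice K] {a b : K} {θ : LatCon K} (h : θ.rel a b) :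
    LatCon.conOf a b ≤ θ := by
  intro x y hxy
  exact hxy θ (fun p q hpq => by rw [hpq.1, hpq.2]; exact h)

end Aux

/-- **Lemma 5.** Let `L` be an SPS lattice and `S` a wide covering square of `L`. Then in the
fork extension `L[S]` (realized as the ambient lattice `K`) we have `γ(S) = ᾱ_l(S)` or
`γ(S) = ᾱ_r(S)`, where `γ(S) = con(t, i)`, `ᾱ_l(S) = con(a_l, i)`, `ᾱ_r(S) = con(a_r, i)`. -/
theorem wide_square_gamma_eq
    {K : Type*} [Lattice K] [Finite K] (L : Sublattice K) (hL : IsSPS L)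
    (S : CovSquare L) (F : ForkExtension K L S) (hS : S.Wide) :
    LatCon.conOf F.t (S.i : K) = LatCon.conOf (S.al : K) (S.i : K) ∨
      LatCon.conOf F.t (S.i : K) = LatCon.conOf (S.ar : K) (S.i : K) := by
  classical
  haveI : Finite L := Finite.of_injective (Subtype.val : L → K) Subtype.val_injective
  have coe_le : ∀ {x y : L}, x ≤ y → (x : K) ≤ (y : K) := fun h => h
  have coe_lt : ∀ {x y : L}, x < y → (x : K) < (y : K) := fun h => h
  have hn0 : 0 < F.n := F.npos
  have hm0 : 0 < F.m := F.mpos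
  -- basic covering facts in K
  have hozl0 : (S.o : K) ⋖ F.zl 0 := by
    have h := F.yl_covby_zl 0 hn0; rwa [F.yl_zero] at h
  have hozr0 : (S.o : K) ⋖ F.zr 0 := by
    have h := F.yr_covby_zr 0 hm0; rwa [F.yr_zero] at h
  have hzl0al : F.zl 0 ⋖ (S.al : K) := by
    have h := F.zl_covby_xl 0 hn0; rwa [F.xl_zero] at h
  have hzr0ar : F.zr 0 ⋖ (S.ar : K) := by
    have h := F.zr_covby_xr 0 hm0; rwa [F.xr_zero] at h
  have hzl0t : F.zl 0 ⋖ F.t := F.zl_zero_covby_t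
  have hzr0t : F.zr 0 ⋖ F.t := F.zr_zero_covby_t
  have hti : F.t ⋖ (S.i : K) := F.t_covby_i
  have h_al_le_i : (S.al : K) ≤ (S.i : K) := coe_le S.al_covby_i.le
  have h_ar_le_i : (S.ar : K) ≤ (S.i : K) := coe_le S.ar_covby_i.le
  -- al and ar are not below t
  have h_al_not_le_t : ¬ (S.al : K) ≤ F.t := by
    intro h
    rcases hzl0t.eq_or_eq hzl0al.le h with h' | h'
    · exact F.zl_not_mem 0 hn0 (h' ▸ SetLike.coe_mem S.al)
    · exact F.t_not_mem (h' ▸ SetLike.coe_mem S.al)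
  have h_ar_not_le_t : ¬ (S.ar : K) ≤ F.t := by
    intro h
    rcases hzr0t.eq_or_eq hzr0ar.le h with h' | h'
    · exact F.zr_not_mem 0 hm0 (h' ▸ SetLike.coe_mem S.ar)
    · exact F.t_not_mem (h' ▸ SetLike.coe_mem S.ar)
  -- t ⊓ al = zl 0 and t ⊓ ar = zr 0
  have h_t_inf_al : F.t ⊓ (S.al : K) = F.zl 0 := by
    rcases hzl0al.eq_or_eq (le_inf hzl0t.le hzl0al.le) inf_le_right with h | h
    · exact h
    · exact absurd (inf_eq_right.mp h) h_al_not_le_t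
  have h_t_inf_ar : F.t ⊓ (S.ar : K) = F.zr 0 := by
    rcases hzr0ar.eq_or_eq (le_inf hzr0t.le hzr0ar.le) inf_le_right with h | h
    · exact h
    · exact absurd (inf_eq_right.mp h) h_ar_not_le_t
  -- zl 0 ⊔ ar = i  and  zr 0 ⊔ al = i
  have h_zl0_sup_ar : F.zl 0 ⊔ (S.ar : K) = (S.i : K) := by
    have hle : F.t ≤ F.zl 0 ⊔ (S.ar : K) := by
      rw [← F.zl_sup_zr]; exact sup_le_sup le_rfl hzr0ar.le
    rcases hti.eq_or_eq hle (sup_le (hzl0t.le.trans hti.le) h_ar_le_i) with h | h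
    · exact absurd (le_sup_right.trans h.le) h_ar_not_le_t
    · exact h
  have h_zr0_sup_al : F.zr 0 ⊔ (S.al : K) = (S.i : K) := by
    have hle : F.t ≤ F.zr 0 ⊔ (S.al : K) := by
      rw [← F.zl_sup_zr]; exact sup_le (hzl0al.le.trans le_sup_right) le_sup_left
    rcases hti.eq_or_eq hle (sup_le (hzr0t.le.trans hti.le) h_al_le_i) with h | h
    · exact absurd (le_sup_right.trans h.le) h_al_not_le_t
    · exact h
  have h_al_inf_ar : (S.al : K) ⊓ (S.ar : K) = (S.o : K) := by
    rw [← Sublattice.coe_inf, S.inf_eq]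
  -- γ ≤ ᾱ_l : the congruence generated by (al, i) collapses (t, i)
  have hψl : (LatCon.conOf (S.al : K) (S.i : K)).rel F.t (S.i : K) := by
    set ψ := LatCon.conOf (S.al : K) (S.i : K) with hψdef
    have h1 : ψ.rel (S.al : K) (S.i : K) := conOf_rel_self _ _
    have h2 := ψ.inf_comp h1 (ψ.refl (S.ar : K))
    rw [h_al_inf_ar, inf_eq_right.mpr h_ar_le_i] at h2
    have h3 := ψ.sup_comp h2 (ψ.refl (F.zr 0))
    rw [sup_eq_right.mpr hozr0.le, sup_eq_left.mpr hzr0ar.le] at h3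
    have h4 := ψ.sup_comp h3 (ψ.refl (F.zl 0))
    rw [sup_comm (F.zr 0) (F.zl 0), F.zl_sup_zr, sup_comm (S.ar : K) (F.zl 0),
      h_zl0_sup_ar] at h4
    exact h4
  have hψr : (LatCon.conOf (S.ar : K) (S.i : K)).rel F.t (S.i : K) := by
    set ψ := LatCon.conOf (S.ar : K) (S.i : K) with hψdef
    have h1 : ψ.rel (S.ar : K) (S.i : K) := conOf_rel_self _ _
    have h2 := ψ.inf_comp h1 (ψ.refl (S.al : K))
    rw [inf_comm (S.ar : K) (S.al : K)] at h2
    rw [h_al_inf_ar, inf_eq_right.mpr h_al_le_i] at h2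
    have h3 := ψ.sup_comp h2 (ψ.refl (F.zl 0))
    rw [sup_eq_right.mpr hozl0.le, sup_eq_left.mpr hzl0al.le] at h3
    have h4 := ψ.sup_comp h3 (ψ.refl (F.zr 0))
    rw [F.zl_sup_zr, sup_comm (S.al : K) (F.zr 0), h_zr0_sup_al] at h4
    exact h4
  -- the third lower cover w of i
  unfold CovSquare.Wide CovSquare.Tight at hS
  push_neg at hS
  obtain ⟨w, hwcov, hwal, hwar⟩ := hS
  have hwi : (w : K) < (S.i : K) := coe_lt hwcov.lt
  have h_w_sup_al : (w : K) ⊔ (S.al : K) = (S.i : K) := by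
    have h : w ⊔ S.al = S.i := by
      rcases S.al_covby_i.eq_or_eq le_sup_right (sup_le hwcov.le S.al_covby_i.le) with h | h
      · exact absurd (lt_of_le_of_ne (sup_eq_right.mp h) hwal) (fun hlt => hwcov.2 hlt S.al_covby_i.lt)
      · exact h
    rw [← Sublattice.coe_sup, h]
  have h_w_sup_ar : (w : K) ⊔ (S.ar : K) = (S.i : K) := by
    have h : w ⊔ S.ar = S.i := by
      rcases S.ar_covby_i.eq_or_eq le_sup_right (sup_le hwcov.le S.ar_covby_i.le) with h | h
      · exact absurd (lt_of_le_of_ne (sup_eq_right.mp h) hwar) (fun hlt => hwcov.2 hlt S.ar_covby_i.lt)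
      · exact h
    rw [← Sublattice.coe_sup, h]
  -- monotone chains
  have hxl_le : ∀ k, k < F.n → F.xl k ≤ S.al := by
    intro k
    induction k with
    | zero => intro _; exact F.xl_zero.le
    | succ k ih => intro hk; exact le_trans (F.xl_succ_covby k hk).le (ih (Nat.lt_of_succ_lt hk))
  have hxr_le : ∀ k, k < F.m → F.xr k ≤ S.ar := by
    intro k
    induction k with
    | zero => intro _; exact F.xr_zero.le
    | succ k ih => intro hk; exact le_trans (F.xr_succ_covby k hk).le (ih (Nat.lt_of_succ_lt hk))
  have hzl_le_al : ∀ k, k < F.n → F.zl k ≤ (S.al : K) :=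
    fun k hk => (F.zl_covby_xl k hk).le.trans (coe_le (hxl_le k hk))
  have hzr_le_ar : ∀ k, k < F.m → F.zr k ≤ (S.ar : K) :=
    fun k hk => (F.zr_covby_xr k hk).le.trans (coe_le (hxr_le k hk))
  -- the key element u = t ⊓ w is below al or below ar
  set u : K := F.t ⊓ (w : K) with hudef
  have hu : u ≤ (S.al : K) ∨ u ≤ (S.ar : K) := by
    rcases F.mem_or_new u with huL | hut | ⟨k, hk, huk⟩ | ⟨k, hk, huk⟩
    · -- u ∈ L : find a lower cover c of t above u and derive information
      have hult : u < F.t :=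
        lt_of_le_of_ne inf_le_left (fun e => F.t_not_mem (e ▸ huL))
      obtain ⟨c, huc, hccov⟩ := exists_le_covBy hult
      rcases F.mem_or_new c with hcL | hct | ⟨k, hk, hck⟩ | ⟨k, hk, hck⟩
      · -- c ∈ L : contradiction with slimness
        exfalso
        have hoc : (S.o : K) ≤ c := by
          have h1 : c ⊔ (S.o : K) ≤ F.t := sup_le hccov.le (hozl0.le.trans hzl0t.le)
          rcases hccov.eq_or_eq le_sup_left h1 with h | h
          · exact sup_eq_left.mp h
          · exact absurd (h ▸ L.supClosed hcL (SetLike.coe_mem S.o)) F.t_not_mem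
        have hco : c ≠ (S.o : K) := by
          intro e
          rw [e] at hccov
          exact hccov.2 hozl0.lt hzl0t.lt
        have hcal : c ⊓ (S.al : K) = (S.o : K) := by
          have h1 : c ⊓ (S.al : K) ≤ F.zl 0 :=
            le_trans (inf_le_inf_right _ hccov.le) h_t_inf_al.le
          have h2 : (S.o : K) ≤ c ⊓ (S.al : K) := le_inf hoc (coe_le S.o_covby_al.le)
          rcases hozl0.eq_or_eq h2 h1 with h | h
          · exact h
          · exact absurd (h ▸ L.infClosed hcL (SetLike.coe_mem S.al)) (F.zl_not_mem 0 hn0)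
        have hcar : c ⊓ (S.ar : K) = (S.o : K) := by
          have h1 : c ⊓ (S.ar : K) ≤ F.zr 0 :=
            le_trans (inf_le_inf_right _ hccov.le) h_t_inf_ar.le
          have h2 : (S.o : K) ≤ c ⊓ (S.ar : K) := le_inf hoc (coe_le S.o_covby_ar.le)
          rcases hozr0.eq_or_eq h2 h1 with h | h
          · exact h
          · exact absurd (h ▸ L.infClosed hcL (SetLike.coe_mem S.ar)) (F.zr_not_mem 0 hm0)
        -- move to L
        set cL : L := ⟨c, hcL⟩ with hcLdef
        have hcalL : cL ⊓ S.al = S.o := Subtype.ext hcal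
        have hcarL : cL ⊓ S.ar = S.o := Subtype.ext hcar
        have hcnot : ¬ cL ≤ S.o := by
          intro h
          exact hco (le_antisymm (coe_le h) hoc)
        obtain ⟨j1, hj1irr, hj1le, hj1n⟩ :=
          exists_supIrred_le (x := S.al) (y := S.o) S.o_covby_al.lt.not_ge
        obtain ⟨j2, hj2irr, hj2le, hj2n⟩ :=
          exists_supIrred_le (x := S.ar) (y := S.o) S.o_covby_ar.lt.not_ge
        obtain ⟨j3, hj3irr, hj3le, hj3n⟩ := exists_supIrred_le hcnot
        refine hL.2 ⟨j1, j2, j3, hj1irr, hj2irr, hj3irr, ?_, ?_, ?_, ?_, ?_, ?_⟩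
        · intro h; exact hj1n (by have := le_inf hj1le (h.trans hj2le); rwa [S.inf_eq] at this)
        · intro h; exact hj2n (by have := le_inf (h.trans hj1le) hj2le; rwa [S.inf_eq] at this)
        · intro h; exact hj1n (by have := le_inf (h.trans hj3le) hj1le; rwa [hcalL] at this)
        · intro h; exact hj3n (by have := le_inf hj3le (h.trans hj1le); rwa [hcalL] at this)
        · intro h; exact hj2n (by have := le_inf (h.trans hj3le) hj2le; rwa [hcarL] at this)
        · intro h; exact hj3n (by have := le_inf hj3le (h.trans hj2le); rwa [hcarL] at this)
      · exact absurd (hct ▸ hccov.lt) (lt_irrefl _)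
      · left
        exact huc.trans (hck ▸ hzl_le_al k hk)
      · right
        exact huc.trans (hck ▸ hzr_le_ar k hk)
    · -- u = t is impossible
      exfalso
      have htw : F.t ≤ (w : K) := hut ▸ inf_le_right
      rcases hti.eq_or_eq htw hwi.le with h | h
      · exact F.t_not_mem (h ▸ SetLike.coe_mem w)
      · exact hwi.ne h
    · left; exact huk ▸ hzl_le_al k hk
    · right; exact huk ▸ hzr_le_ar k hk
  rcases hu with hual | huar
  · -- con(t,i) collapses (al, i)
    left
    have hθ : (LatCon.conOf F.t (S.i : K)).rel (S.al : K) (S.i : K) := by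
      set θ := LatCon.conOf F.t (S.i : K) with hθdef
      have h1 : θ.rel F.t (S.i : K) := conOf_rel_self _ _
      have h2 := θ.inf_comp h1 (θ.refl (w : K))
      rw [inf_eq_right.mpr hwi.le] at h2
      have h3 := θ.sup_comp h2 (θ.refl (S.al : K))
      rw [show F.t ⊓ (w : K) ⊔ (S.al : K) = (S.al : K) from sup_eq_right.mpr hual,
        h_w_sup_al] at h3
      exact h3
    exact le_antisymm (conOf_le hψl) (conOf_le hθ)
  · right
    have hθ : (LatCon.conOf F.t (S.i : K)).rel (S.ar : K) (S.i : K) := by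
      set θ := LatCon.conOf F.t (S.i : K) with hθdef
      have h1 : θ.rel F.t (S.i : K) := conOf_rel_self _ _
      have h2 := θ.inf_comp h1 (θ.refl (w : K))
      rw [inf_eq_right.mpr hwi.le] at h2
      have h3 := θ.sup_comp h2 (θ.refl (S.ar : K))
      rw [show F.t ⊓ (w : K) ⊔ (S.ar : K) = (S.ar : K) from sup_eq_right.mpr huar,
        h_w_sup_ar] at h3
      exact h3
    exact le_antisymm (conOf_le hψr) (conOf_le hθ)

end ForkCongruence
end

section
/- Let L be an SPS lattice and S a distributive covering square of L. Then the equivalence relation on L[S] whose only nontrivial classes are {z_{l,1}, x_{l,1}}, …, {z_{l,n}, x_{l,n}}, {t, i}, {z_{r,1}, x_{r,1}}, …, {z_{r,m}, x_{r,m}} is a congruence relation of L[S]. -/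
namespace ForkCongruence

/-! Write `φ x` for the least element of `L` above `x ∈ L[S]`. It fixes `L` and sends
`z_{l,k} ↦ x_{l,k}`, `t ↦ i`, `z_{r,k} ↦ x_{r,k}`, so the relation of the theorem is the
kernel of `φ`, and it is a congruence once `φ` is a lattice homomorphism. Being left adjoint to
the inclusion `L ↪ L[S]`, `φ` preserves joins. Every new element `x` equals `φ x ⊓ t`, so `φ`
preserves meets as soon as `φ (u ⊓ t) = u` for all `u ≤ i` in `L`. Slimness and the
distributivity of `↓i` force `i` to have only the lower covers `a_l, a_r`, and force the
elements of `↓a_l` not below `o` to be exactly the `x_{l,k}` (the fork chain cannot stop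
earlier); so `u` is `i`, some `x_{l,k}`, some `x_{r,k}`, or lies below `o ≤ t`, and each case is
immediate. -/

namespace LatCon

def ker {K M : Type*} [Lattice K] [Lattice M] (f : LatticeHom K M) : LatCon K where
  rel x y := f x = f y
  refl _ := rfl
  symm := Eq.symm
  trans := Eq.trans
  sup_comp h₁ h₂ := by rw [map_sup, map_sup, h₁, h₂]
  inf_comp h₁ h₂ := by rw [map_inf, map_inf, h₁, h₂]

end LatCon

lemma le_apply_zero_of_succ_le {β : Type*} [Preorder β] {f : ℕ → β} {n : ℕ}
    (hf : ∀ k, k + 1 < n → f (k + 1) ≤ f k) {k : ℕ} (hk : k < n) : f k ≤ f 0 := by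
  induction k with
  | zero => exact le_rfl
  | succ k ih => exact (hf k hk).trans (ih (by omega))

section Lattice

variable {α : Type*} [Lattice α]

def IsDistribBelow (x : α) : Prop :=
  ∀ a b c : α, a ≤ x → b ≤ x → c ≤ x → a ⊓ (b ⊔ c) = a ⊓ b ⊔ a ⊓ c

lemma IsDistribBelow.mono {x y : α} (hx : IsDistribBelow x) (hyx : y ≤ x) :
    IsDistribBelow y :=
  fun a b c ha hb hc => hx a b c (ha.trans hyx) (hb.trans hyx) (hc.trans hyx)

lemma not_inf_le_of_covBy {x p q r : α} (hx : IsDistribBelow x) (hp : p ⋖ x) (hq : q ⋖ x)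
    (hr : r ⋖ x) (hpr : p ≠ r) (hqr : q ≠ r) : ¬ p ⊓ q ≤ r := by
  intro hle
  have hpr' : p ≤ r := calc
    p = p ⊓ (r ⊔ q) := by rw [hr.wcovBy.sup_eq hq.wcovBy hqr.symm, inf_eq_left.mpr hp.le]
    _ = p ⊓ r ⊔ p ⊓ q := hx p r q hp.le hr.le hq.le
    _ ≤ r := sup_le inf_le_right hle
  exact hpr (hpr'.eq_of_not_lt fun h => hp.2 h hr.lt)

lemma inf_covBy_of_covBy {x v y : α} (hx : IsDistribBelow x) (hv : v ⋖ x) (hy : y ⋖ x)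
    (hne : v ≠ y) : v ⊓ y ⋖ v := by
  refine ⟨inf_lt_left.mpr fun h => hne (h.eq_of_not_lt fun h' => hv.2 h' hy.lt),
    fun c hc hcv => ?_⟩
  rcases hy.eq_or_eq le_sup_right (sup_le (hcv.le.trans hv.le) hy.le) with h | h
  · exact hc.not_ge (le_inf hcv.le (sup_eq_right.mp h))
  · refine hcv.ne' (calc
      v = v ⊓ (c ⊔ y) := by rw [h, inf_eq_left.mpr hv.le]
      _ = v ⊓ c ⊔ v ⊓ y := hx v c y hv.le (hcv.le.trans hv.le) hy.le
      _ = c := by rw [inf_eq_right.mpr hcv.le, sup_eq_left.mpr hc.le])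

lemma exists_supIrred_le_not_le [WellFoundedLT α] {a b : α} (h : ¬ a ≤ b) :
    ∃ q : α, SupIrred q ∧ q ≤ a ∧ ¬ q ≤ b := by
  induction a using WellFoundedLT.induction with
  | _ a ih =>
    by_cases ha : SupIrred a
    · exact ⟨a, ha, le_rfl, h⟩
    rw [not_supIrred] at ha
    obtain ha | ⟨c, d, rfl, hc, hd⟩ := ha
    · exact absurd ((ha inf_le_left).trans inf_le_right) h
    by_cases hcb : c ≤ b
    · obtain ⟨q, hq, hqd, hqb⟩ := ih d hd fun hdb => h (sup_le hcb hdb)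
      exact ⟨q, hq, hqd.trans le_sup_right, hqb⟩
    · obtain ⟨q, hq, hqc, hqb⟩ := ih c hc hcb
      exact ⟨q, hq, hqc.trans le_sup_left, hqb⟩

/-- Three distinct lower covers would yield three pairwise incomparable join-irreducibles,
one below each pairwise meet but not below the third cover. -/
lemma eq_or_eq_or_eq_of_covBy [WellFoundedLT α] (hslim : IsSlim α) {x u v w : α}
    (hx : IsDistribBelow x) (hu : u ⋖ x) (hv : v ⋖ x) (hw : w ⋖ x) :
    u = v ∨ u = w ∨ v = w := by
  by_contra! h
  obtain ⟨huv, huw, hvw⟩ := h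
  obtain ⟨a, ha, hav, hau⟩ :=
    exists_supIrred_le_not_le (not_inf_le_of_covBy hx hv hw hu huv.symm huw.symm)
  obtain ⟨b, hb, hbu, hbv⟩ :=
    exists_supIrred_le_not_le (not_inf_le_of_covBy hx hu hw hv huv hvw.symm)
  obtain ⟨c, hc, hcu, hcw⟩ :=
    exists_supIrred_le_not_le (not_inf_le_of_covBy hx hu hv hw huw hvw)
  exact hslim ⟨a, b, c, ha, hb, hc,
    fun h => hau (h.trans (hbu.trans inf_le_left)),
    fun h => hbv (h.trans (hav.trans inf_le_left)),
    fun h => hau (h.trans (hcu.trans inf_le_left)),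
    fun h => hcw (h.trans (hav.trans inf_le_right)),
    fun h => hbv (h.trans (hcu.trans inf_le_right)),
    fun h => hcw (h.trans (hbu.trans inf_le_right))⟩

lemma CovSquare.le_al_or_le_ar [Finite α] (hslim : IsSlim α) {S : CovSquare α}
    (hS : S.Distributive) {u : α} (hu : u < S.i) : u ≤ S.al ∨ u ≤ S.ar := by
  obtain ⟨v, huv, hv⟩ := exists_le_covBy_of_lt hu
  rcases eq_or_eq_or_eq_of_covBy hslim hS hv S.al_covby_i S.ar_covby_i with rfl | rfl | h
  · exact Or.inl huv
  · exact Or.inr huv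
  · exact absurd h S.al_ne_ar

end Lattice

namespace Sublattice

variable {K : Type*} [Lattice K] {L : Sublattice K}

lemma le_of_covBy_of_le_of_notMem {a : K} {b u : L} (hab : a ⋖ b) (hau : a ≤ u)
    (ha : a ∉ L) : b ≤ u := by
  rcases hab.eq_or_eq (le_inf hab.le hau) inf_le_left with h | h
  · exact absurd (h ▸ L.inf_mem b.2 u.2) ha
  · exact show (b : K) ≤ u from inf_eq_left.mp h

lemma le_of_le_of_covBy_of_notMem {a : K} {b u : L} (hua : u ≤ a) (hba : (b : K) ⋖ a)
    (ha : a ∉ L) : u ≤ b := by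
  rcases hba.eq_or_eq le_sup_right (sup_le hua hba.le) with h | h
  · exact show (u : K) ≤ b from sup_eq_right.mp h
  · exact absurd (h ▸ L.sup_mem u.2 b.2) ha

end Sublattice

def CovSquare.swap {K : Type*} [Lattice K] (S : CovSquare K) : CovSquare K where
  o := S.o
  al := S.ar
  ar := S.al
  i := S.i
  al_ne_ar := S.al_ne_ar.symm
  inf_eq := by rw [inf_comm]; exact S.inf_eq
  sup_eq := by rw [sup_comm]; exact S.sup_eq
  o_covby_al := S.o_covby_ar
  o_covby_ar := S.o_covby_al
  al_covby_i := S.ar_covby_i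
  ar_covby_i := S.al_covby_i

namespace ForkExtension

variable {K : Type*} [Lattice K] {L : Sublattice K} {S : CovSquare L}
  (F : ForkExtension K L S)

def swap : ForkExtension K L S.swap where
  n := F.m
  m := F.n
  npos := F.mpos
  mpos := F.npos
  t := F.t
  zl := F.zr
  zr := F.zl
  xl := F.xr
  yl := F.yr
  xr := F.xl
  yr := F.yl
  xl_zero := F.xr_zero
  yl_zero := F.yr_zero
  xr_zero := F.xl_zero
  yr_zero := F.yl_zero
  xl_succ_covby := F.xr_succ_covby
  yl_succ_covby := F.yr_succ_covby
  yl_covby_xl := F.yr_covby_xr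
  xl_succ_ne_yl := F.xr_succ_ne_yr
  xl_inf_yl := F.xr_inf_yr
  xl_sup_yl := F.xr_sup_yr
  left_max := F.right_max
  xr_succ_covby := F.xl_succ_covby
  yr_succ_covby := F.yl_succ_covby
  yr_covby_xr := F.yl_covby_xl
  xr_succ_ne_yr := F.xl_succ_ne_yl
  xr_inf_yr := F.xl_inf_yl
  xr_sup_yr := F.xl_sup_yl
  right_max := F.left_max
  t_not_mem := F.t_not_mem
  zl_not_mem := F.zr_not_mem
  zr_not_mem := F.zl_not_mem
  mem_or_new x := by
    rcases F.mem_or_new x with h | h | h | h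
    exacts [Or.inl h, Or.inr (Or.inl h), Or.inr (Or.inr (Or.inr h)), Or.inr (Or.inr (Or.inl h))]
  zl_sup_zr := by rw [sup_comm]; exact F.zl_sup_zr
  zl_zero_covby_t := F.zr_zero_covby_t
  zr_zero_covby_t := F.zl_zero_covby_t
  t_covby_i := F.t_covby_i
  zl_succ_covby := F.zr_succ_covby
  zr_succ_covby := F.zl_succ_covby
  yl_covby_zl := F.yr_covby_zr
  zl_covby_xl := F.zr_covby_xr
  yr_covby_zr := F.yl_covby_zl
  zr_covby_xr := F.zl_covby_xl

variable {k : ℕ}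

lemma yl_le_o (hk : k < F.n) : F.yl k ≤ S.o :=
  F.yl_zero ▸ le_apply_zero_of_succ_le (fun j hj => (F.yl_succ_covby j hj).le) hk

lemma xl_le_al (hk : k < F.n) : F.xl k ≤ S.al :=
  F.xl_zero ▸ le_apply_zero_of_succ_le (fun j hj => (F.xl_succ_covby j hj).le) hk

lemma xl_le_i (hk : k < F.n) : F.xl k ≤ S.i := (F.xl_le_al hk).trans S.al_covby_i.le

lemma zl_le_t (hk : k < F.n) : F.zl k ≤ F.t :=
  (le_apply_zero_of_succ_le (fun j hj => (F.zl_succ_covby j hj).le) hk).trans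
    F.zl_zero_covby_t.le

lemma t_le_i : F.t ≤ S.i := F.t_covby_i.le

lemma o_le_t : (S.o : K) ≤ F.t := by
  rw [← F.yl_zero]
  exact (F.yl_covby_zl 0 F.npos).le.trans (F.zl_le_t F.npos)

lemma not_xl_le_o (hk : k < F.n) : ¬ F.xl k ≤ S.o := by
  induction k with
  | zero => rw [F.xl_zero]; exact S.o_covby_al.lt.not_ge
  | succ k ih =>
    intro h
    refine ih (by omega) ?_
    rw [← F.xl_sup_yl k hk]
    exact sup_le h (F.yl_le_o (by omega))

lemma isLeast_zl (hk : k < F.n) : IsLeast {v : L | F.zl k ≤ v} (F.xl k) :=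
  ⟨(F.zl_covby_xl k hk).le, fun _ hv =>
    Sublattice.le_of_covBy_of_le_of_notMem (F.zl_covby_xl k hk) hv (F.zl_not_mem k hk)⟩

lemma isLeast_zr (hk : k < F.m) : IsLeast {v : L | F.zr k ≤ v} (F.xr k) := F.swap.isLeast_zl hk

lemma isLeast_t : IsLeast {v : L | F.t ≤ v} S.i :=
  ⟨F.t_le_i, fun _ hv => Sublattice.le_of_covBy_of_le_of_notMem F.t_covby_i hv F.t_not_mem⟩

lemma al_inf_t : (S.al : K) ⊓ F.t = F.zl 0 := by
  have hzl : F.zl 0 ≤ S.al := F.xl_zero ▸ (F.zl_covby_xl 0 F.npos).le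
  rcases F.zl_zero_covby_t.eq_or_eq (le_inf hzl F.zl_zero_covby_t.le) inf_le_right with h | h
  · exact h
  · exact absurd (F.isLeast_t.2 (inf_eq_right.mp h)) S.al_covby_i.lt.not_ge

lemma xl_inf_t (hk : k < F.n) : (F.xl k : K) ⊓ F.t = F.zl k := by
  have hc := F.zl_covby_xl k hk
  rcases hc.eq_or_eq (le_inf hc.le (F.zl_le_t hk)) inf_le_left with h | h
  · exact h
  · have hxz : (F.xl k : K) ≤ F.zl 0 :=
      F.al_inf_t ▸ le_inf (F.xl_le_al hk) (inf_eq_left.mp h)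
    refine absurd ?_ (F.not_xl_le_o hk)
    rw [← F.yl_zero]
    exact Sublattice.le_of_le_of_covBy_of_notMem hxz (F.yl_covby_zl 0 F.npos)
      (F.zl_not_mem 0 F.npos)

lemma xr_inf_t (hk : k < F.m) : (F.xr k : K) ⊓ F.t = F.zr k := F.swap.xl_inf_t hk

lemma exists_isLeast (F : ForkExtension K L S) (x : K) :
    ∃ u : L, IsLeast {v : L | x ≤ v} u := by
  rcases F.mem_or_new x with hx | rfl | ⟨k, hk, rfl⟩ | ⟨k, hk, rfl⟩
  · exact ⟨⟨x, hx⟩, le_rfl, fun _ hv => hv⟩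
  · exact ⟨_, F.isLeast_t⟩
  · exact ⟨_, F.isLeast_zl hk⟩
  · exact ⟨_, F.isLeast_zr hk⟩

noncomputable def reflect (x : K) : L := (F.exists_isLeast x).choose

lemma isLeast_reflect (x : K) : IsLeast {v : L | x ≤ v} (F.reflect x) :=
  (F.exists_isLeast x).choose_spec

lemma reflect_eq_of_isLeast {x : K} {u : L} (h : IsLeast {v : L | x ≤ v} u) : F.reflect x = u :=
  (F.isLeast_reflect x).unique h

lemma gc_reflect : GaloisConnection F.reflect ((↑) : L → K) := fun x _ =>
  ⟨fun h => (F.isLeast_reflect x).1.trans h, fun h => (F.isLeast_reflect x).2 h⟩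

lemma reflect_coe (u : L) : F.reflect u = u := F.reflect_eq_of_isLeast ⟨le_rfl, fun _ hv => hv⟩

lemma reflect_zl (hk : k < F.n) : F.reflect (F.zl k) = F.xl k :=
  F.reflect_eq_of_isLeast (F.isLeast_zl hk)

lemma reflect_zr (hk : k < F.m) : F.reflect (F.zr k) = F.xr k :=
  F.reflect_eq_of_isLeast (F.isLeast_zr hk)

lemma reflect_t : F.reflect F.t = S.i := F.reflect_eq_of_isLeast F.isLeast_t

lemma coe_reflect_inf_t_of_notMem {x : K} (hx : x ∉ L) : (F.reflect x : K) ⊓ F.t = x := by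
  rcases F.mem_or_new x with hx' | rfl | ⟨k, hk, rfl⟩ | ⟨k, hk, rfl⟩
  · exact absurd hx' hx
  · rw [F.reflect_t, inf_eq_right.mpr F.t_le_i]
  · rw [F.reflect_zl hk, F.xl_inf_t hk]
  · rw [F.reflect_zr hk, F.xr_inf_t hk]

lemma mem_of_not_le_t {x : K} (hx : ¬ x ≤ F.t) : x ∈ L := by
  by_contra h
  exact hx (F.coe_reflect_inf_t_of_notMem h ▸ inf_le_right)

lemma inf_t_eq_reflect_inf_t (x : K) : x ⊓ F.t = (F.reflect x : K) ⊓ F.t := by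
  by_cases hx : x ∈ L
  · lift x to L using hx
    rw [F.reflect_coe]
  · conv_lhs => rw [← F.coe_reflect_inf_t_of_notMem hx, inf_assoc, inf_idem]

section Slim

variable [Finite L]

/-- The case `k + 1 = n` is excluded by the maximality of `n`. -/
lemma le_xl_succ (hL : IsSlim L) (hS : S.Distributive) (hk : k < F.n) {u : L}
    (hux : u < F.xl k) (huy : ¬ u ≤ F.yl k) : k + 1 < F.n ∧ u ≤ F.xl (k + 1) := by
  obtain ⟨v, huv, hv⟩ := exists_le_covBy_of_lt hux
  have hvy : v ≠ F.yl k := fun h => huy (h ▸ huv)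
  have hdist : IsDistribBelow (F.xl k) := IsDistribBelow.mono hS (F.xl_le_i hk)
  by_cases hk1 : k + 1 < F.n
  · refine ⟨hk1, ?_⟩
    rcases eq_or_eq_or_eq_of_covBy hL hdist hv (F.yl_covby_xl k hk) (F.xl_succ_covby k hk1)
      with h | h | h
    · exact absurd h hvy
    · exact h ▸ huv
    · exact absurd h.symm (F.xl_succ_ne_yl k hk1)
  · obtain rfl : k = F.n - 1 := by omega
    have hy := F.yl_covby_xl _ hk
    refine absurd ⟨v, hv, hvy, inf_covBy_of_covBy hdist hv hy hvy, ?_,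
      hv.wcovBy.sup_eq hy.wcovBy hvy⟩ F.left_max
    rw [inf_comm]
    exact inf_covBy_of_covBy hdist hy hv hvy.symm

lemma exists_eq_xl (hL : IsSlim L) (hS : S.Distributive) {k : ℕ} (hk : k < F.n) {u : L}
    (hux : u ≤ F.xl k) (huy : ¬ u ≤ F.yl k) : ∃ j < F.n, u = F.xl j := by
  rcases hux.eq_or_lt with rfl | hlt
  · exact ⟨k, hk, rfl⟩
  obtain ⟨hk1, hu1⟩ := F.le_xl_succ hL hS hk hlt huy
  exact exists_eq_xl hL hS hk1 hu1 fun h => huy (h.trans (F.yl_succ_covby k hk1).le)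
termination_by F.n - k

lemma cases_of_le_i (hL : IsSlim L) (hS : S.Distributive) {u : L} (hu : u ≤ S.i) :
    u = S.i ∨ u ≤ S.o ∨ (∃ k < F.n, u = F.xl k) ∨ ∃ k < F.m, u = F.xr k := by
  rcases hu.eq_or_lt with h | hlt
  · exact Or.inl h
  by_cases huo : u ≤ S.o
  · exact Or.inr (Or.inl huo)
  rcases S.le_al_or_le_ar hL hS hlt with hal | har
  · exact Or.inr (Or.inr (Or.inl
      (F.exists_eq_xl hL hS F.npos (F.xl_zero ▸ hal) (F.yl_zero ▸ huo))))
  · exact Or.inr (Or.inr (Or.inr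
      (F.swap.exists_eq_xl hL hS F.mpos (F.swap.xl_zero ▸ har) (F.swap.yl_zero ▸ huo))))

lemma reflect_coe_inf_t (hL : IsSlim L) (hS : S.Distributive) {u : L} (hu : u ≤ S.i) :
    F.reflect (u ⊓ F.t) = u := by
  rcases F.cases_of_le_i hL hS hu with rfl | huo | ⟨k, hk, rfl⟩ | ⟨k, hk, rfl⟩
  · rw [inf_eq_right.mpr F.t_le_i, F.reflect_t]
  · rw [inf_eq_left.mpr ((show (u : K) ≤ S.o from huo).trans F.o_le_t), F.reflect_coe]
  · rw [F.xl_inf_t hk, F.reflect_zl hk]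
  · rw [F.xr_inf_t hk, F.reflect_zr hk]

lemma reflect_inf (hL : IsSlim L) (hS : S.Distributive) (a b : K) :
    F.reflect (a ⊓ b) = F.reflect a ⊓ F.reflect b := by
  by_cases hab : a ≤ F.t ∨ b ≤ F.t
  · have hle : a ⊓ b ≤ F.t := hab.elim inf_le_left.trans inf_le_right.trans
    have hi : F.reflect a ⊓ F.reflect b ≤ S.i := hab.elim
      (fun h => inf_le_left.trans (F.gc_reflect.l_le (h.trans F.t_le_i)))
      (fun h => inf_le_right.trans (F.gc_reflect.l_le (h.trans F.t_le_i)))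
    have hab' : a ⊓ b = ↑(F.reflect a ⊓ F.reflect b) ⊓ F.t := by
      rw [Sublattice.coe_inf, inf_inf_distrib_right, ← F.inf_t_eq_reflect_inf_t,
        ← F.inf_t_eq_reflect_inf_t, ← inf_inf_distrib_right, inf_eq_left.mpr hle]
    rw [hab', F.reflect_coe_inf_t hL hS hi]
  · obtain ⟨ha, hb⟩ := not_or.mp hab
    lift a to L using F.mem_of_not_le_t ha
    lift b to L using F.mem_of_not_le_t hb
    rw [← Sublattice.coe_inf, F.reflect_coe, F.reflect_coe, F.reflect_coe]

noncomputable def reflectHom (hL : IsSlim L) (hS : S.Distributive) : LatticeHom K L where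
  toFun := F.reflect
  map_sup' _ _ := F.gc_reflect.l_sup
  map_inf' := F.reflect_inf hL hS

end Slim

def gamma (x y : K) : Prop :=
  x = y ∨
    (∃ k < F.n, (x = F.zl k ∧ y = (F.xl k : K)) ∨ (x = (F.xl k : K) ∧ y = F.zl k)) ∨
    ((x = F.t ∧ y = (S.i : K)) ∨ (x = (S.i : K) ∧ y = F.t)) ∨
    (∃ k < F.m, (x = F.zr k ∧ y = (F.xr k : K)) ∨ (x = (F.xr k : K) ∧ y = F.zr k))

lemma gamma_symm {x y : K} : F.gamma x y → F.gamma y x := by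
  rintro (h | ⟨k, hk, h⟩ | h | ⟨k, hk, h⟩)
  · exact Or.inl h.symm
  · exact Or.inr (Or.inl ⟨k, hk, h.symm.imp And.symm And.symm⟩)
  · exact Or.inr (Or.inr (Or.inl (h.symm.imp And.symm And.symm)))
  · exact Or.inr (Or.inr (Or.inr ⟨k, hk, h.symm.imp And.symm And.symm⟩))

lemma gamma_reflect_of_notMem {x : K} (hx : x ∉ L) : F.gamma x (F.reflect x) := by
  rcases F.mem_or_new x with h | rfl | ⟨k, hk, rfl⟩ | ⟨k, hk, rfl⟩
  · exact absurd h hx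
  · rw [F.reflect_t]; exact Or.inr (Or.inr (Or.inl (Or.inl ⟨rfl, rfl⟩)))
  · rw [F.reflect_zl hk]; exact Or.inr (Or.inl ⟨k, hk, Or.inl ⟨rfl, rfl⟩⟩)
  · rw [F.reflect_zr hk]; exact Or.inr (Or.inr (Or.inr ⟨k, hk, Or.inl ⟨rfl, rfl⟩⟩))

lemma reflect_eq_reflect_iff {x y : K} : F.reflect x = F.reflect y ↔ F.gamma x y := by
  constructor
  · intro h
    by_cases hx : x ∈ L <;> by_cases hy : y ∈ L
    · lift x to L using hx
      lift y to L using hy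
      rw [F.reflect_coe, F.reflect_coe] at h
      exact Or.inl (congrArg _ h)
    · lift x to L using hx
      rw [F.reflect_coe] at h
      exact h ▸ F.gamma_symm (F.gamma_reflect_of_notMem hy)
    · lift y to L using hy
      rw [F.reflect_coe] at h
      exact h ▸ F.gamma_reflect_of_notMem hx
    · left
      rw [← F.coe_reflect_inf_t_of_notMem hx, ← F.coe_reflect_inf_t_of_notMem hy, h]
  · rintro (rfl | ⟨k, hk, ⟨rfl, rfl⟩ | ⟨rfl, rfl⟩⟩ | (⟨rfl, rfl⟩ | ⟨rfl, rfl⟩) |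
      ⟨k, hk, ⟨rfl, rfl⟩ | ⟨rfl, rfl⟩⟩) <;>
      simp [F.reflect_coe, F.reflect_t, F.reflect_zl, F.reflect_zr, *]

end ForkExtension

/-- **Lemma 7.** Let `L` be an SPS lattice and `S` a distributive covering square of `L`. Then
the equivalence relation on `L[S]` (realized as the ambient lattice `K`) whose only nontrivial
classes are `{z_{l,1}, x_{l,1}}, …, {z_{l,n}, x_{l,n}}`, `{t, i}`,
`{z_{r,1}, x_{r,1}}, …, {z_{r,m}, x_{r,m}}` is a congruence of `L[S]`. -/
theorem distributive_square_gamma_congruence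
    {K : Type*} [Lattice K] [Finite K] (L : Sublattice K) (hL : IsSPS L)
    (S : CovSquare L) (F : ForkExtension K L S) (hS : S.Distributive) :
    ∃ θ : LatCon K, ∀ x y : K, θ.rel x y ↔
      (x = y ∨
       (∃ k < F.n, (x = F.zl k ∧ y = (F.xl k : K)) ∨ (x = (F.xl k : K) ∧ y = F.zl k)) ∨
       ((x = F.t ∧ y = (S.i : K)) ∨ (x = (S.i : K) ∧ y = F.t)) ∨
       (∃ k < F.m, (x = F.zr k ∧ y = (F.xr k : K)) ∨ (x = (F.xr k : K) ∧ y = F.zr k))) :=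
  ⟨LatCon.ker (F.reflectHom hL.2 hS), fun _ _ => F.reflect_eq_reflect_iff⟩

end ForkCongruence
end
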